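/- Let G be a finite prereduced graph and let H be a hole of G whose length is minimum among all the holes of G that are congenial to H. Then the set N̂(H) of common neighbors of H separates N[H] \ N̂(H) from V(G) \ N[H]: in the graph G − N̂(H), there is no path connecting a vertex of N[H] \ N̂(H) to a vertex of V(G) \ N[H]. -/

import Mathlib

/-- A graph is an interval graph if each vertex can be assigned a (nonempty) closed real
interval such that two distinct vertices are adjacent iff their intervals intersect. -/
def IsIntervalGraph {V : Type*} (G : SimpleGraph V) : Prop :=
  ∃ f : V → Set ℝ,
    (∀ v, ∃ a b : ℝ, a ≤ b ∧ f v = Set.Icc a b) ∧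
    ∀ u v : V, u ≠ v → (G.Adj u v ↔ (f u ∩ f v).Nonempty)

/-- A hole is an induced (chordless) cycle on at least 4 vertices, identified
with its vertex set. -/
def IsHole {V : Type*} (G : SimpleGraph V) (H : Set V) : Prop :=
  ∃ m : ℕ, 4 ≤ m ∧ ∃ f : ZMod m → V,
    Function.Injective f ∧ Set.range f = H ∧
      ∀ i j : ZMod m, G.Adj (f i) (f j) ↔ (j = i + 1 ∨ i = j + 1)

/-- A minimal forbidden set: the induced subgraph is not interval, but every
proper subset induces an interval graph. -/
def IsMinimalForbidden {V : Type*} (G : SimpleGraph V) (X : Set V) : Prop :=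
  ¬ IsIntervalGraph (G.induce X) ∧ ∀ Y : Set V, Y ⊂ X → IsIntervalGraph (G.induce Y)

/-- A graph is prereduced if it has no minimal forbidden set of at most 10 vertices. -/
def Prereduced {V : Type*} (G : SimpleGraph V) : Prop :=
  ∀ X : Set V, X.ncard ≤ 10 → ¬ IsMinimalForbidden G X

/-- A module: any two vertices of `M` have exactly the same neighbors outside `M`. -/
def IsGraphModule {V : Type*} (G : SimpleGraph V) (M : Set V) : Prop :=
  ∀ u ∈ M, ∀ v ∈ M, ∀ x ∉ M, (G.Adj u x ↔ G.Adj v x)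

/-- A graph is reduced if it is prereduced and every nontrivial module induces a clique. -/
def Reduced {V : Type*} [Fintype V] (G : SimpleGraph V) : Prop :=
  Prereduced G ∧
    ∀ M : Set V, IsGraphModule G M → 1 < M.ncard → M.ncard < Fintype.card V →
      G.IsClique M

/-- Closed neighborhood `N[v]`. -/
def closedNbhd {V : Type*} (G : SimpleGraph V) (v : V) : Set V :=
  insert v (G.neighborSet v)

/-- Closed neighborhood of a set, `N[U] = ⋃ v ∈ U, N[v]`. -/
def closedNbhdSet {V : Type*} (G : SimpleGraph V) (U : Set V) : Set V :=
  ⋃ v ∈ U, closedNbhd G v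

/-- The set of common neighbors of a vertex set `X`. -/
def commonNbrs {V : Type*} (G : SimpleGraph V) (X : Set V) : Set V :=
  {v | ∀ x ∈ X, G.Adj v x}

/-- `P` induces a chordless path: it can be enumerated so that adjacency holds
exactly between consecutive vertices. -/
def IsInducedPath {V : Type*} (G : SimpleGraph V) (P : Set V) : Prop :=
  ∃ n : ℕ, ∃ f : Fin (n + 1) → V, Function.Injective f ∧ Set.range f = P ∧
    ∀ i j : Fin (n + 1), G.Adj (f i) (f j) ↔ (i.val + 1 = j.val ∨ j.val + 1 = i.val)

/-- A shallow terminal: a vertex `s` contained in a minimal forbidden set `W` that is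
not a hole, such that `W \ N[s]` induces a chordless path. -/
def ShallowTerminal {V : Type*} (G : SimpleGraph V) (s : V) : Prop :=
  ∃ W : Set V, IsMinimalForbidden G W ∧ s ∈ W ∧ ¬ IsHole G W ∧
    IsInducedPath G (W \ closedNbhd G s)

/-- A hole cover: a vertex set intersecting every hole. -/
def HoleCover {V : Type*} (G : SimpleGraph V) (C : Set V) : Prop :=
  ∀ H : Set V, IsHole G H → (C ∩ H).Nonempty

/-- A minimal hole cover: a hole cover no proper subset of which is a hole cover. -/
def MinimalHoleCover {V : Type*} (G : SimpleGraph V) (C : Set V) : Prop :=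
  HoleCover G C ∧ ∀ C' : Set V, C' ⊂ C → ¬ HoleCover G C'

/-- An interval deletion set: a vertex set whose removal leaves an interval graph. -/
def IntervalDeletionSet {V : Type*} (G : SimpleGraph V) (Q : Set V) : Prop :=
  IsIntervalGraph (G.induce Qᶜ)

/-- A minimum interval deletion set. -/
def MinIntervalDeletionSet {V : Type*} (G : SimpleGraph V) (Q : Set V) : Prop :=
  IntervalDeletionSet G Q ∧
    ∀ Q' : Set V, IntervalDeletionSet G Q' → Q.ncard ≤ Q'.ncard

/-- Two holes are congenial if each is contained in the closed neighborhood of the other. -/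
def Congenial {V : Type*} (G : SimpleGraph V) (H₁ H₂ : Set V) : Prop :=
  H₁ ⊆ closedNbhdSet G H₂ ∧ H₂ ⊆ closedNbhdSet G H₁

/-- The graph `G − S`: edges of `G` with both endpoints outside `S`
(vertices of `S` become isolated). -/
def deleteSet {V : Type*} (G : SimpleGraph V) (S : Set V) : SimpleGraph V where
  Adj u v := G.Adj u v ∧ u ∉ S ∧ v ∉ S
  symm := ⟨fun u v h => ⟨h.1.symm, h.2.2, h.2.1⟩⟩
  loopless := ⟨fun v h => G.loopless.irrefl v h.1⟩

/-!
Suppose an edge `x y` leaves `N[H] \ N̂(H)` with `y ∉ N[H]`. A hole is never an interval graph,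
so in a prereduced graph every hole has at least 11 vertices. Rotate `H = g 0, …, g (m - 1)` so
that `x` sees `g 0` but not `g (m - 1)`, and let `g 0, …, g (r - 1)` be the run of neighbours of
`x` starting there. For `r = 1, 2, 3`, the vertex `y`, the vertex `x` and a few hole vertices form
a long claw, a net or a `†`-graph on at most 7 vertices, none of which is an interval graph. For
`r ≥ 4`, either `x` has a further neighbour on `H`, giving a long claw centred at `x`, or `x`
together with `g (r - 1), …, g (m - 1), g 0` is a hole of length `m - r + 3 < m` congenial to `H`.
-/

section IntervalModels

variable {W : Type*} {G : SimpleGraph W}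

theorem IsIntervalGraph.exists_endpoints (hG : IsIntervalGraph G) :
    ∃ a b : W → ℝ, (∀ v, a v ≤ b v) ∧
      ∀ u v, u ≠ v → (G.Adj u v ↔ a u ≤ b v ∧ a v ≤ b u) := by
  obtain ⟨I, hI, hadj⟩ := hG
  choose a b hab hIcc using hI
  refine ⟨a, b, hab, fun u v huv => ?_⟩
  simp only [hadj u v huv, hIcc, Set.Icc_inter_Icc, Set.nonempty_Icc, sup_le_iff, le_inf_iff]
  exact ⟨fun h => ⟨h.2.1, h.1.2⟩, fun h => ⟨⟨hab u, h.2⟩, h.1, hab v⟩⟩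

theorem lt_or_lt_of_not_adj {u v : W} {a b : W → ℝ} (h : G.Adj u v ↔ a u ≤ b v ∧ a v ≤ b u)
    (huv : ¬ G.Adj u v) : b v < a u ∨ b u < a v := by
  contrapose! huv
  exact h.2 huv

end IntervalModels

theorem ZMod.natCast_eq_natCast_add_one_iff {n i j : ℕ} (hi : i < n) (hj : j < n) :
    (j : ZMod n) = i + 1 ↔ j = i + 1 ∨ i + 1 = n ∧ j = 0 := by
  rw [← Nat.cast_succ, ZMod.natCast_eq_natCast_iff', Nat.mod_eq_of_lt hj]
  rcases (Nat.succ_le_of_lt hi).lt_or_eq with h | h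
  · rw [Nat.mod_eq_of_lt h]; omega
  · rw [h, Nat.mod_self]; omega

theorem ZMod.exists_and_not_sub_one {m : ℕ} [NeZero m] {P : ZMod m → Prop} (h : ∃ i, P i)
    (h' : ∃ i, ¬ P i) : ∃ s, P s ∧ ¬ P (s - 1) := by
  obtain ⟨i, hi⟩ := h
  obtain ⟨j, hj⟩ := h'
  obtain ⟨n, hn, hn'⟩ := Nat.exists_not_and_succ_of_not_zero_of_exists
    (p := fun n : ℕ => P (j + n)) (by simpa using hj)
    ⟨(i - j).val, by rwa [ZMod.natCast_zmod_val, add_sub_cancel]⟩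
  exact ⟨j + (n + 1 : ℕ), hn', by rwa [Nat.cast_succ, ← add_assoc, add_sub_cancel_right]⟩

section InducedCycles

variable {V : Type*} {G : SimpleGraph V} {m : ℕ} {f : ZMod m → V}

structure IsInducedCycle (G : SimpleGraph V) {m : ℕ} (f : ZMod m → V) : Prop where
  injective : Function.Injective f
  adj_iff : ∀ i j, G.Adj (f i) (f j) ↔ j = i + 1 ∨ i = j + 1

theorem isHole_iff {H : Set V} :
    IsHole G H ↔ ∃ m, 4 ≤ m ∧ ∃ f : ZMod m → V, IsInducedCycle G f ∧ Set.range f = H :=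
  ⟨fun ⟨m, hm, f, hinj, hH, hadj⟩ => ⟨m, hm, f, ⟨hinj, hadj⟩, hH⟩,
    fun ⟨m, hm, f, hf, hH⟩ => ⟨m, hm, f, hf.injective, hH, hf.adj_iff⟩⟩

namespace IsInducedCycle

theorem rotate (hf : IsInducedCycle G f) (c : ZMod m) : IsInducedCycle G (fun i => f (c + i)) where
  injective := hf.injective.comp (add_right_injective c)
  adj_iff i j := by simp only [hf.adj_iff, add_assoc, add_right_inj]

theorem ncard_range [NeZero m] (hf : IsInducedCycle G f) : (Set.range f).ncard = m := by
  rw [← Set.image_univ, Set.ncard_image_of_injective _ hf.injective, Set.ncard_univ,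
    Nat.card_eq_fintype_card, ZMod.card]

theorem adj_natCast_iff (hf : IsInducedCycle G f) {i j : ℕ} (hi : i < m) (hj : j < m) :
    G.Adj (f i) (f j) ↔ j = i + 1 ∨ i = j + 1 ∨ i + 1 = m ∧ j = 0 ∨ j + 1 = m ∧ i = 0 := by
  rw [hf.adj_iff, ZMod.natCast_eq_natCast_add_one_iff hi hj,
    ZMod.natCast_eq_natCast_add_one_iff hj hi]
  tauto

theorem natCast_ne (hf : IsInducedCycle G f) {i j : ℕ} (hi : i < m) (hj : j < m) (hij : i ≠ j) :
    f i ≠ f j := by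
  rw [hf.injective.ne_iff, Ne, ZMod.natCast_eq_natCast_iff', Nat.mod_eq_of_lt hi,
    Nat.mod_eq_of_lt hj]
  exact hij

theorem adj_add_one (hf : IsInducedCycle G f) (i : ZMod m) : G.Adj (f i) (f (i + 1)) :=
  (hf.adj_iff _ _).2 (Or.inl rfl)

theorem ne_of_forall_not_adj (hf : IsInducedCycle G f) {y : V} (hy : ∀ i, ¬ G.Adj y (f i))
    (i : ZMod m) : y ≠ f i := by
  rintro rfl
  exact hy _ (hf.adj_add_one i)

theorem of_natCast [NeZero m] (hinj : ∀ i j, i < m → j < m → f i = f j → i = j)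
    (hadj : ∀ i j, i < m → j < m →
      (G.Adj (f i) (f j) ↔ j = i + 1 ∨ i = j + 1 ∨ i + 1 = m ∧ j = 0 ∨ j + 1 = m ∧ i = 0)) :
    IsInducedCycle G f where
  injective z w h := by
    rw [← ZMod.natCast_zmod_val z, ← ZMod.natCast_zmod_val w] at h ⊢
    rw [hinj _ _ z.val_lt w.val_lt h]
  adj_iff z w := by
    rw [← ZMod.natCast_zmod_val z, ← ZMod.natCast_zmod_val w, hadj _ _ z.val_lt w.val_lt,
      ZMod.natCast_eq_natCast_add_one_iff z.val_lt w.val_lt,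
      ZMod.natCast_eq_natCast_add_one_iff w.val_lt z.val_lt]
    tauto

end IsInducedCycle

/-- The two cycle-neighbours of the vertex whose interval ends first both contain that endpoint,
so they would be adjacent. -/
theorem IsIntervalGraph.not_isInducedCycle {W : Type*} {G : SimpleGraph W} (hG : IsIntervalGraph G)
    {f : ZMod m → W} (hm : 4 ≤ m) : ¬ IsInducedCycle G f := by
  intro hf
  obtain ⟨a, b, -, hrep⟩ := hG.exists_endpoints
  have : NeZero m := ⟨by omega⟩
  obtain ⟨c, hc⟩ := Finite.exists_min (fun i => b (f i))
  have hg := hf.rotate c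
  have hprev := (hg.adj_natCast_iff (i := m - 1) (j := 0) (by omega) (by omega)).2 (by omega)
  have hnext := (hg.adj_natCast_iff (i := 1) (j := 0) (by omega) (by omega)).2 (by omega)
  have hfar := (hg.adj_natCast_iff (i := m - 1) (j := 1) (by omega) (by omega)).not.2 (by omega)
  have hne := hg.natCast_ne (i := m - 1) (j := 1) (by omega) (by omega) (by omega)
  obtain ⟨h₁, -⟩ := (hrep _ _ hprev.ne).1 hprev
  obtain ⟨h₂, -⟩ := (hrep _ _ hnext.ne).1 hnext
  simp only [Nat.cast_zero, add_zero] at h₁ h₂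
  exact hfar ((hrep _ _ hne).2 ⟨h₁.trans (hc _), h₂.trans (hc _)⟩)

end InducedCycles

section Prereduced

variable {V : Type*} {G : SimpleGraph V} {m : ℕ}

theorem Prereduced.isIntervalGraph_induce (hG : Prereduced G) {X : Set V} (hX : X.Finite)
    (h10 : X.ncard ≤ 10) : IsIntervalGraph (G.induce X) := by
  by_contra hX'
  have hfin : {Y : Set V | Y ⊆ X ∧ ¬ IsIntervalGraph (G.induce Y)}.Finite :=
    hX.finite_subsets.subset fun Y hY => hY.1
  obtain ⟨Y, ⟨hYX, hY⟩, hmin⟩ := hfin.exists_minimal ⟨X, subset_rfl, hX'⟩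
  refine hG Y ((Set.ncard_le_ncard hYX hX).trans h10) ⟨hY, fun Z hZY => ?_⟩
  by_contra hZ
  exact hZY.2 (hmin ⟨hZY.subset.trans hYX, hZ⟩ hZY.subset)

theorem Prereduced.exists_endpoints (hG : Prereduced G) (l : List V) (hl : l.length ≤ 10) :
    ∃ a b : V → ℝ, (∀ v ∈ l, a v ≤ b v) ∧
      ∀ u ∈ l, ∀ v ∈ l, u ≠ v → (G.Adj u v ↔ a u ≤ b v ∧ a v ≤ b u) := by
  classical
  have hcard : {v | v ∈ l}.ncard ≤ 10 := by
    rw [show {v | v ∈ l} = (l.toFinset : Set V) by ext; simp, Set.ncard_coe_finset]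
    exact l.toFinset_card_le.trans hl
  obtain ⟨a, b, hab, hrep⟩ := (hG.isIntervalGraph_induce l.finite_toSet hcard).exists_endpoints
  refine ⟨fun v => if h : v ∈ l then a ⟨v, h⟩ else 0, fun v => if h : v ∈ l then b ⟨v, h⟩ else 0,
    fun v hv => ?_, fun u hu v hv huv => ?_⟩
  · simp only [dif_pos hv]
    exact hab _
  · simp only [dif_pos hu, dif_pos hv]
    exact hrep ⟨u, hu⟩ ⟨v, hv⟩ (by simpa using huv)

theorem Prereduced.false_of_longClaw (hG : Prereduced G) (z u₁ u₂ u₃ w₁ w₂ w₃ : V)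
    (hzu₁ : G.Adj z u₁) (hzu₂ : G.Adj z u₂) (hzu₃ : G.Adj z u₃)
    (huw₁ : G.Adj u₁ w₁) (huw₂ : G.Adj u₂ w₂) (huw₃ : G.Adj u₃ w₃)
    (h₁₂ : u₁ ≠ u₂) (h₁₃ : u₁ ≠ u₃) (h₂₃ : u₂ ≠ u₃) (hw₁ : w₁ ≠ z) (hw₂ : w₂ ≠ z) (hw₃ : w₃ ≠ z)
    (n₁₂ : ¬ G.Adj u₁ u₂) (n₁₃ : ¬ G.Adj u₁ u₃) (n₂₃ : ¬ G.Adj u₂ u₃)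
    (nw₁ : ¬ G.Adj w₁ z) (nw₂ : ¬ G.Adj w₂ z) (nw₃ : ¬ G.Adj w₃ z) : False := by
  obtain ⟨a, b, hab, hrep⟩ := hG.exists_endpoints [z, u₁, u₂, u₃, w₁, w₂, w₃] (by simp)
  obtain ⟨_, _⟩ := (hrep _ (by simp) _ (by simp) hzu₁.ne).1 hzu₁
  obtain ⟨_, _⟩ := (hrep _ (by simp) _ (by simp) hzu₂.ne).1 hzu₂
  obtain ⟨_, _⟩ := (hrep _ (by simp) _ (by simp) hzu₃.ne).1 hzu₃
  obtain ⟨_, _⟩ := (hrep _ (by simp) _ (by simp) huw₁.ne).1 huw₁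
  obtain ⟨_, _⟩ := (hrep _ (by simp) _ (by simp) huw₂.ne).1 huw₂
  obtain ⟨_, _⟩ := (hrep _ (by simp) _ (by simp) huw₃.ne).1 huw₃
  rcases lt_or_lt_of_not_adj (hrep _ (by simp) _ (by simp) h₁₂) n₁₂ with _ | _ <;>
  rcases lt_or_lt_of_not_adj (hrep _ (by simp) _ (by simp) h₁₃) n₁₃ with _ | _ <;>
  rcases lt_or_lt_of_not_adj (hrep _ (by simp) _ (by simp) h₂₃) n₂₃ with _ | _ <;>
  rcases lt_or_lt_of_not_adj (hrep _ (by simp) _ (by simp) hw₁) nw₁ with _ | _ <;>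
  rcases lt_or_lt_of_not_adj (hrep _ (by simp) _ (by simp) hw₂) nw₂ with _ | _ <;>
  rcases lt_or_lt_of_not_adj (hrep _ (by simp) _ (by simp) hw₃) nw₃ with _ | _ <;>
  linarith [hab z (by simp), hab u₁ (by simp), hab u₂ (by simp), hab u₃ (by simp),
    hab w₁ (by simp), hab w₂ (by simp), hab w₃ (by simp)]

theorem Prereduced.false_of_net (hG : Prereduced G) (t₁ t₂ t₃ p₁ p₂ p₃ : V)
    (h₁₂ : G.Adj t₁ t₂) (h₁₃ : G.Adj t₁ t₃) (h₂₃ : G.Adj t₂ t₃)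
    (hp₁ : G.Adj p₁ t₁) (hp₂ : G.Adj p₂ t₂) (hp₃ : G.Adj p₃ t₃)
    (m₁₂ : p₁ ≠ t₂) (m₁₃ : p₁ ≠ t₃) (m₂₁ : p₂ ≠ t₁) (m₂₃ : p₂ ≠ t₃) (m₃₁ : p₃ ≠ t₁)
    (m₃₂ : p₃ ≠ t₂)
    (n₁₂ : ¬ G.Adj p₁ t₂) (n₁₃ : ¬ G.Adj p₁ t₃) (n₂₁ : ¬ G.Adj p₂ t₁) (n₂₃ : ¬ G.Adj p₂ t₃)
    (n₃₁ : ¬ G.Adj p₃ t₁) (n₃₂ : ¬ G.Adj p₃ t₂) : False := by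
  obtain ⟨a, b, hab, hrep⟩ := hG.exists_endpoints [t₁, t₂, t₃, p₁, p₂, p₃] (by simp)
  obtain ⟨_, _⟩ := (hrep _ (by simp) _ (by simp) h₁₂.ne).1 h₁₂
  obtain ⟨_, _⟩ := (hrep _ (by simp) _ (by simp) h₁₃.ne).1 h₁₃
  obtain ⟨_, _⟩ := (hrep _ (by simp) _ (by simp) h₂₃.ne).1 h₂₃
  obtain ⟨_, _⟩ := (hrep _ (by simp) _ (by simp) hp₁.ne).1 hp₁
  obtain ⟨_, _⟩ := (hrep _ (by simp) _ (by simp) hp₂.ne).1 hp₂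
  obtain ⟨_, _⟩ := (hrep _ (by simp) _ (by simp) hp₃.ne).1 hp₃
  rcases lt_or_lt_of_not_adj (hrep _ (by simp) _ (by simp) m₁₂) n₁₂ with _ | _ <;>
  rcases lt_or_lt_of_not_adj (hrep _ (by simp) _ (by simp) m₁₃) n₁₃ with _ | _ <;>
  rcases lt_or_lt_of_not_adj (hrep _ (by simp) _ (by simp) m₂₁) n₂₁ with _ | _ <;>
  rcases lt_or_lt_of_not_adj (hrep _ (by simp) _ (by simp) m₂₃) n₂₃ with _ | _ <;>
  rcases lt_or_lt_of_not_adj (hrep _ (by simp) _ (by simp) m₃₁) n₃₁ with _ | _ <;>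
  rcases lt_or_lt_of_not_adj (hrep _ (by simp) _ (by simp) m₃₂) n₃₂ with _ | _ <;>
  linarith [hab t₁ (by simp), hab t₂ (by simp), hab t₃ (by simp), hab p₁ (by simp),
    hab p₂ (by simp), hab p₃ (by simp)]

/-- The `†`-graph: a path `c₀ c₁ c₂ c₃ c₄`, a vertex `q` seeing `c₁ c₂ c₃`, and a pendant `p`
at `q`. -/
theorem Prereduced.false_of_dagger (hG : Prereduced G) (p q c₀ c₁ c₂ c₃ c₄ : V)
    (h₀₁ : G.Adj c₀ c₁) (h₁₂ : G.Adj c₁ c₂) (h₂₃ : G.Adj c₂ c₃) (h₃₄ : G.Adj c₃ c₄)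
    (hq₁ : G.Adj q c₁) (hq₂ : G.Adj q c₂) (hq₃ : G.Adj q c₃) (hpq : G.Adj p q)
    (m₁₃ : c₁ ≠ c₃) (mp₁ : p ≠ c₁) (mp₂ : p ≠ c₂) (mp₃ : p ≠ c₃) (mq₀ : q ≠ c₀) (mq₄ : q ≠ c₄)
    (n₁₃ : ¬ G.Adj c₁ c₃) (np₁ : ¬ G.Adj p c₁) (np₂ : ¬ G.Adj p c₂) (np₃ : ¬ G.Adj p c₃)
    (nq₀ : ¬ G.Adj q c₀) (nq₄ : ¬ G.Adj q c₄) : False := by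
  obtain ⟨a, b, hab, hrep⟩ := hG.exists_endpoints [p, q, c₀, c₁, c₂, c₃, c₄] (by simp)
  obtain ⟨_, _⟩ := (hrep _ (by simp) _ (by simp) h₀₁.ne).1 h₀₁
  obtain ⟨_, _⟩ := (hrep _ (by simp) _ (by simp) h₁₂.ne).1 h₁₂
  obtain ⟨_, _⟩ := (hrep _ (by simp) _ (by simp) h₂₃.ne).1 h₂₃
  obtain ⟨_, _⟩ := (hrep _ (by simp) _ (by simp) h₃₄.ne).1 h₃₄
  obtain ⟨_, _⟩ := (hrep _ (by simp) _ (by simp) hq₁.ne).1 hq₁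
  obtain ⟨_, _⟩ := (hrep _ (by simp) _ (by simp) hq₂.ne).1 hq₂
  obtain ⟨_, _⟩ := (hrep _ (by simp) _ (by simp) hq₃.ne).1 hq₃
  obtain ⟨_, _⟩ := (hrep _ (by simp) _ (by simp) hpq.ne).1 hpq
  rcases lt_or_lt_of_not_adj (hrep _ (by simp) _ (by simp) m₁₃) n₁₃ with _ | _ <;>
  rcases lt_or_lt_of_not_adj (hrep _ (by simp) _ (by simp) mp₁) np₁ with _ | _ <;>
  rcases lt_or_lt_of_not_adj (hrep _ (by simp) _ (by simp) mp₂) np₂ with _ | _ <;>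
  rcases lt_or_lt_of_not_adj (hrep _ (by simp) _ (by simp) mp₃) np₃ with _ | _ <;>
  rcases lt_or_lt_of_not_adj (hrep _ (by simp) _ (by simp) mq₀) nq₀ with _ | _ <;>
  rcases lt_or_lt_of_not_adj (hrep _ (by simp) _ (by simp) mq₄) nq₄ with _ | _ <;>
  linarith [hab p (by simp), hab q (by simp), hab c₀ (by simp), hab c₁ (by simp),
    hab c₂ (by simp), hab c₃ (by simp), hab c₄ (by simp)]

theorem Prereduced.eleven_le_of_isInducedCycle (hG : Prereduced G) {f : ZMod m → V} (hm : 4 ≤ m)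
    (hf : IsInducedCycle G f) : 11 ≤ m := by
  have : NeZero m := ⟨by omega⟩
  by_contra! hm'
  have hint := hG.isIntervalGraph_induce (Set.finite_range f) (by rw [hf.ncard_range]; omega)
  exact hint.not_isInducedCycle (f := Set.rangeFactorization f) hm
    ⟨fun i j h => hf.injective (congrArg Subtype.val h), hf.adj_iff⟩

end Prereduced

section Arcs

variable {V : Type*} {G : SimpleGraph V} {m : ℕ} {g : ZMod m → V} {x : V}

def arcCycle (g : ZMod m → V) (x : V) (k : ℕ) : ZMod (k + 3) → V :=
  fun z => if z.val = k + 2 then x else g z.val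

theorem arcCycle_natCast (g : ZMod m → V) (x : V) {k i : ℕ} (hi : i < k + 3) :
    arcCycle g x k i = if i = k + 2 then x else g i := by
  simp only [arcCycle, ZMod.val_natCast_of_lt hi]

theorem range_arcCycle (g : ZMod m → V) (x : V) (k : ℕ) :
    Set.range (arcCycle g x k) = insert x ((fun t : ℕ => g t) '' Set.Iic (k + 1)) := by
  ext v
  simp only [Set.mem_range, Set.mem_insert_iff, Set.mem_image, Set.mem_Iic]
  constructor
  · rintro ⟨z, rfl⟩
    rw [← ZMod.natCast_zmod_val z, arcCycle_natCast g x z.val_lt]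
    split_ifs with h
    · exact Or.inl rfl
    · exact Or.inr ⟨z.val, by have := z.val_lt; omega, rfl⟩
  · rintro (rfl | ⟨t, ht, rfl⟩)
    · exact ⟨(k + 2 : ℕ), by rw [arcCycle_natCast g _ (by omega), if_pos rfl]⟩
    · exact ⟨t, by rw [arcCycle_natCast g x (by omega), if_neg (by omega)]⟩

theorem IsInducedCycle.arcCycle (hg : IsInducedCycle G g) {k : ℕ} (hk : k + 3 ≤ m)
    (hx : ∀ i, x ≠ g i) (hadj : ∀ t ≤ k + 1, G.Adj x (g t) ↔ t = 0 ∨ t = k + 1) :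
    IsInducedCycle G (arcCycle g x k) := by
  refine .of_natCast (fun i j hi hj h => ?_) (fun i j hi hj => ?_)
  · rw [arcCycle_natCast g x hi, arcCycle_natCast g x hj] at h
    split_ifs at h with hi' hj' hj'
    · omega
    · exact absurd h (hx _)
    · exact absurd h.symm (hx _)
    · by_contra hij
      exact hg.natCast_ne (by omega) (by omega) hij h
  · rw [arcCycle_natCast g x hi, arcCycle_natCast g x hj]
    split_ifs with hi' hj' hj'
    · simp only [G.irrefl, false_iff]; omega
    · rw [hadj j (by omega)]; omega
    · rw [G.adj_comm, hadj i (by omega)]; omega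
    · rw [hg.adj_natCast_iff (by omega) (by omega)]; omega

end Arcs

section Congenial

variable {V : Type*} {G : SimpleGraph V}

theorem mem_closedNbhdSet_iff {U : Set V} {v : V} :
    v ∈ closedNbhdSet G U ↔ ∃ u ∈ U, v = u ∨ G.Adj u v := by
  simp [closedNbhdSet, closedNbhd]

theorem congenial_insert {H A : Set V} {x : V} (hA : A ⊆ H) (hx : x ∈ closedNbhdSet G H)
    (hcov : ∀ v ∈ H, v ∈ A ∨ G.Adj x v) : Congenial G H (insert x A) := by
  refine ⟨fun v hv => mem_closedNbhdSet_iff.2 ?_, Set.insert_subset hx fun v hv => ?_⟩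
  · rcases hcov v hv with h | h
    · exact ⟨v, Set.mem_insert_of_mem _ h, Or.inl rfl⟩
    · exact ⟨x, Set.mem_insert _ _, Or.inr h⟩
  · exact mem_closedNbhdSet_iff.2 ⟨v, hA hv, Or.inl rfl⟩

end Congenial

section Attachment

variable {V : Type*} {G : SimpleGraph V} {m : ℕ} {g : ZMod m → V} {x y : V}

theorem Prereduced.adj_succ_of_adj_of_adj_add_two (hG : Prereduced G) (hg : IsInducedCycle G g)
    (hm : 4 ≤ m) (hx : ∀ i, x ≠ g i) {i : ℕ} (h₀ : G.Adj x (g i))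
    (h₂ : G.Adj x (g (i + 2 : ℕ))) : G.Adj x (g (i + 1 : ℕ)) := by
  -- otherwise `x, g i, g (i + 1), g (i + 2)` is a hole of length 4
  by_contra h₁
  have hC := (hg.rotate i).arcCycle (k := 1) hm (fun _ => hx _) fun t ht => by
    interval_cases t <;> simp_all
  have := hG.eleven_le_of_isInducedCycle (by norm_num) hC
  omega

theorem Prereduced.false_of_run_one (hG : Prereduced G) (hg : IsInducedCycle G g) (hm : 5 ≤ m)
    (hx : ∀ i, x ≠ g i) (hy : ∀ i, ¬ G.Adj y (g i)) (hxy : G.Adj x y)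
    (h₀ : G.Adj x (g (0 : ℕ))) (hlast : ¬ G.Adj x (g (m - 1 : ℕ)))
    (h₁ : ¬ G.Adj x (g (1 : ℕ))) : False := by
  have h₂ : ¬ G.Adj x (g (2 : ℕ)) := fun h₂ =>
    h₁ (hG.adj_succ_of_adj_of_adj_add_two hg (by omega) hx h₀ h₂)
  have hm₂ : ¬ G.Adj x (g (m - 2 : ℕ)) := fun h => by
    have h₀' : G.Adj x (g (m - 2 + 2 : ℕ)) := by
      rwa [Nat.sub_add_cancel (by omega), ZMod.natCast_self, ← Nat.cast_zero]
    have := hG.adj_succ_of_adj_of_adj_add_two hg (by omega) hx h h₀'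
    rw [show m - 2 + 1 = m - 1 by omega] at this
    exact hlast this
  exact hG.false_of_longClaw (g (0 : ℕ)) (g (m - 1 : ℕ)) (g (1 : ℕ)) x (g (m - 2 : ℕ)) (g (2 : ℕ)) y
    ((hg.adj_natCast_iff (by omega) (by omega)).2 (by omega))
    ((hg.adj_natCast_iff (by omega) (by omega)).2 (by omega)) h₀.symm
    ((hg.adj_natCast_iff (by omega) (by omega)).2 (by omega))
    ((hg.adj_natCast_iff (by omega) (by omega)).2 (by omega)) hxy
    (hg.natCast_ne (by omega) (by omega) (by omega)) (hx _).symm (hx _).symm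
    (hg.natCast_ne (by omega) (by omega) (by omega))
    (hg.natCast_ne (by omega) (by omega) (by omega)) (hg.ne_of_forall_not_adj hy _)
    ((hg.adj_natCast_iff (by omega) (by omega)).not.2 (by omega)) (fun h => hlast h.symm)
    (fun h => h₁ h.symm)
    ((hg.adj_natCast_iff (by omega) (by omega)).not.2 (by omega))
    ((hg.adj_natCast_iff (by omega) (by omega)).not.2 (by omega)) (hy _)

theorem Prereduced.false_of_run_two (hG : Prereduced G) (hg : IsInducedCycle G g) (hm : 4 ≤ m)
    (hx : ∀ i, x ≠ g i) (hy : ∀ i, ¬ G.Adj y (g i)) (hxy : G.Adj x y)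
    (h₀ : G.Adj x (g (0 : ℕ))) (hlast : ¬ G.Adj x (g (m - 1 : ℕ)))
    (h₁ : G.Adj x (g (1 : ℕ))) (h₂ : ¬ G.Adj x (g (2 : ℕ))) : False :=
  hG.false_of_net x (g (0 : ℕ)) (g (1 : ℕ)) y (g (m - 1 : ℕ)) (g (2 : ℕ)) h₀ h₁
    ((hg.adj_natCast_iff (by omega) (by omega)).2 (by omega)) hxy.symm
    ((hg.adj_natCast_iff (by omega) (by omega)).2 (by omega))
    ((hg.adj_natCast_iff (by omega) (by omega)).2 (by omega))
    (hg.ne_of_forall_not_adj hy _) (hg.ne_of_forall_not_adj hy _) (hx _).symm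
    (hg.natCast_ne (by omega) (by omega) (by omega)) (hx _).symm
    (hg.natCast_ne (by omega) (by omega) (by omega)) (hy _) (hy _) (fun h => hlast h.symm)
    ((hg.adj_natCast_iff (by omega) (by omega)).not.2 (by omega)) (fun h => h₂ h.symm)
    ((hg.adj_natCast_iff (by omega) (by omega)).not.2 (by omega))

theorem Prereduced.false_of_run_three (hG : Prereduced G) (hg : IsInducedCycle G g) (hm : 4 ≤ m)
    (hx : ∀ i, x ≠ g i) (hy : ∀ i, ¬ G.Adj y (g i)) (hxy : G.Adj x y)
    (h₀ : G.Adj x (g (0 : ℕ))) (hlast : ¬ G.Adj x (g (m - 1 : ℕ)))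
    (h₁ : G.Adj x (g (1 : ℕ))) (h₂ : G.Adj x (g (2 : ℕ))) (h₃ : ¬ G.Adj x (g (3 : ℕ))) : False :=
  hG.false_of_dagger y x (g (m - 1 : ℕ)) (g (0 : ℕ)) (g (1 : ℕ)) (g (2 : ℕ)) (g (3 : ℕ))
    ((hg.adj_natCast_iff (by omega) (by omega)).2 (by omega))
    ((hg.adj_natCast_iff (by omega) (by omega)).2 (by omega))
    ((hg.adj_natCast_iff (by omega) (by omega)).2 (by omega))
    ((hg.adj_natCast_iff (by omega) (by omega)).2 (by omega)) h₀ h₁ h₂ hxy.symm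
    (hg.natCast_ne (by omega) (by omega) (by omega)) (hg.ne_of_forall_not_adj hy _)
    (hg.ne_of_forall_not_adj hy _) (hg.ne_of_forall_not_adj hy _) (hx _) (hx _)
    ((hg.adj_natCast_iff (by omega) (by omega)).not.2 (by omega)) (hy _) (hy _) (hy _) hlast h₃

theorem Prereduced.false_of_two_runs (hG : Prereduced G) (hg : IsInducedCycle G g)
    (hx : ∀ i, x ≠ g i) (h₀ : G.Adj x (g (0 : ℕ))) (hlast : ¬ G.Adj x (g (m - 1 : ℕ)))
    {r u : ℕ} (hr : 3 ≤ r) (hrun : ∀ j < r, G.Adj x (g j)) (hxr : ¬ G.Adj x (g r))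
    (hru : r < u) (hum : u < m) (hxu : G.Adj x (g u)) : False := by
  obtain ⟨n, hxn, hum', hxu'⟩ : ∃ n, ¬ G.Adj x (g (r + n : ℕ)) ∧ r + (n + 1) < m ∧
      G.Adj x (g (r + (n + 1) : ℕ)) := by
    obtain ⟨n, hn, hn'⟩ := Nat.exists_not_and_succ_of_not_zero_of_exists
      (p := fun n => r + n < m ∧ G.Adj x (g (r + n : ℕ))) (fun h => hxr h.2)
      ⟨u - r, by omega, by rwa [Nat.add_sub_cancel' hru.le]⟩
    exact ⟨n, fun h => hn ⟨by omega, h⟩, hn'⟩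
  have hum'' : r + (n + 1) ≠ m - 1 := fun h => hlast (h ▸ hxu')
  exact hG.false_of_longClaw x (g (0 : ℕ)) (g (r - 1 : ℕ)) (g (r + (n + 1) : ℕ)) (g (m - 1 : ℕ))
    (g r) (g (r + n : ℕ)) h₀ (hrun _ (by omega)) hxu'
    ((hg.adj_natCast_iff (by omega) (by omega)).2 (by omega))
    ((hg.adj_natCast_iff (by omega) (by omega)).2 (by omega))
    ((hg.adj_natCast_iff (by omega) (by omega)).2 (by omega))
    (hg.natCast_ne (by omega) (by omega) (by omega))
    (hg.natCast_ne (by omega) (by omega) (by omega))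
    (hg.natCast_ne (by omega) (by omega) (by omega)) (hx _).symm (hx _).symm (hx _).symm
    ((hg.adj_natCast_iff (by omega) (by omega)).not.2 (by omega))
    ((hg.adj_natCast_iff (by omega) (by omega)).not.2 (by omega))
    ((hg.adj_natCast_iff (by omega) (by omega)).not.2 (by omega))
    (fun h => hlast h.symm) (fun h => hxr h.symm) (fun h => hxn h.symm)

/-- `x` short-cuts the hole through `g (r - 1), …, g (m - 1), g 0`, giving a shorter congenial
hole. -/
theorem false_of_single_run (hg : IsInducedCycle G g) (hx : ∀ i, x ≠ g i) {r : ℕ} (hr : 4 ≤ r)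
    (hrm : r < m) (hrun : ∀ j < m, G.Adj x (g j) ↔ j < r)
    (hxH : x ∈ closedNbhdSet G (Set.range g))
    (hmin : ∀ H' : Set V, IsHole G H' → Congenial G (Set.range g) H' →
      (Set.range g).ncard ≤ H'.ncard) : False := by
  have : NeZero m := ⟨by omega⟩
  have harc : ∀ t ≤ m - r + 1,
      G.Adj x (g ((r - 1 : ℕ) + t)) ↔ t = 0 ∨ t = m - r + 1 := by
    intro t ht
    rw [← Nat.cast_add]
    rcases (show r - 1 + t < m ∨ r - 1 + t = m by omega) with h | h
    · rw [hrun _ h]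
      omega
    · rw [h, ZMod.natCast_self, ← Nat.cast_zero, hrun 0 (by omega)]
      omega
  have hC := (hg.rotate (r - 1 : ℕ)).arcCycle (k := m - r) (by omega) (fun _ => hx _) harc
  have hcong : Congenial G (Set.range g)
      (Set.range (arcCycle (fun i => g (((r - 1 : ℕ) : ZMod m) + i)) x (m - r))) := by
    rw [range_arcCycle]
    refine congenial_insert ?_ hxH ?_
    · rintro _ ⟨t, -, rfl⟩
      exact ⟨_, rfl⟩
    · rintro _ ⟨i, rfl⟩
      rw [← ZMod.natCast_zmod_val i]
      by_cases hi : i.val < r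
      · exact Or.inr ((hrun _ i.val_lt).2 hi)
      · have := i.val_lt
        refine Or.inl ⟨i.val - (r - 1), by simp only [Set.mem_Iic]; omega, ?_⟩
        dsimp only
        rw [← Nat.cast_add, Nat.add_sub_cancel' (by omega)]
  have := hmin _ (isHole_iff.2 ⟨m - r + 3, by omega, _, hC, rfl⟩) hcong
  rw [hg.ncard_range, hC.ncard_range] at this
  omega

theorem Prereduced.false_of_adj_zero (hG : Prereduced G) (hg : IsInducedCycle G g) (hm : 5 ≤ m)
    (hmin : ∀ H' : Set V, IsHole G H' → Congenial G (Set.range g) H' →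
      (Set.range g).ncard ≤ H'.ncard)
    (hxH : x ∈ closedNbhdSet G (Set.range g)) (hx : ∀ i, x ≠ g i) (hy : ∀ i, ¬ G.Adj y (g i))
    (hxy : G.Adj x y) (h₀ : G.Adj x (g (0 : ℕ))) (hlast : ¬ G.Adj x (g (m - 1 : ℕ))) : False := by
  classical
  have hex : ∃ k : ℕ, ¬ G.Adj x (g k) := ⟨m - 1, hlast⟩
  obtain ⟨r, hxr, hrun, hrm⟩ : ∃ r : ℕ, ¬ G.Adj x (g r) ∧ (∀ j < r, G.Adj x (g j)) ∧ r ≤ m - 1 :=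
    ⟨Nat.find hex, Nat.find_spec hex, fun j hj => not_not.1 (Nat.find_min hex hj),
      Nat.find_min' hex hlast⟩
  have hr : r ≠ 0 := by
    rintro rfl
    exact hxr h₀
  obtain rfl | rfl | rfl | hr4 : r = 1 ∨ r = 2 ∨ r = 3 ∨ 4 ≤ r := by omega
  · exact hG.false_of_run_one hg hm hx hy hxy h₀ hlast hxr
  · exact hG.false_of_run_two hg (by omega) hx hy hxy h₀ hlast (hrun 1 (by omega)) hxr
  · exact hG.false_of_run_three hg (by omega) hx hy hxy h₀ hlast (hrun 1 (by omega))
      (hrun 2 (by omega)) hxr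
  · by_cases hu : ∃ u, r < u ∧ u < m ∧ G.Adj x (g u)
    · obtain ⟨u, hru, hum, hxu⟩ := hu
      exact hG.false_of_two_runs hg hx h₀ hlast (by omega) hrun hxr hru hum hxu
    · refine false_of_single_run hg hx hr4 (by omega) (fun j hj => ⟨fun hxj => ?_, hrun j⟩) hxH hmin
      by_contra hjr
      rcases (show j = r ∨ r < j by omega) with rfl | hrj
      · exact hxr hxj
      · exact hu ⟨j, hrj, hj, hxj⟩

theorem Prereduced.not_adj_of_minimal_hole (hG : Prereduced G) {f : ZMod m → V}
    (hf : IsInducedCycle G f) (hm : 4 ≤ m)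
    (hmin : ∀ H' : Set V, IsHole G H' → Congenial G (Set.range f) H' →
      (Set.range f).ncard ≤ H'.ncard)
    (hxH : x ∈ closedNbhdSet G (Set.range f)) (hxN : x ∉ commonNbrs G (Set.range f))
    (hy : y ∉ closedNbhdSet G (Set.range f)) : ¬ G.Adj x y := by
  intro hxy
  have hm11 := hG.eleven_le_of_isInducedCycle hm hf
  have : NeZero m := ⟨by omega⟩
  have hyf : ∀ i, ¬ G.Adj y (f i) := fun i h =>
    hy (mem_closedNbhdSet_iff.2 ⟨f i, ⟨i, rfl⟩, Or.inr h.symm⟩)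
  have hx : ∀ i, x ≠ f i := by
    rintro i rfl
    exact hy (mem_closedNbhdSet_iff.2 ⟨f i, ⟨i, rfl⟩, Or.inr hxy⟩)
  obtain ⟨s, hs, hs'⟩ : ∃ s, G.Adj x (f s) ∧ ¬ G.Adj x (f (s - 1)) := by
    refine ZMod.exists_and_not_sub_one ?_ (by simpa [commonNbrs] using hxN)
    obtain ⟨_, ⟨i, rfl⟩, h | h⟩ := mem_closedNbhdSet_iff.1 hxH
    · exact absurd h (hx i)
    · exact ⟨i, h.symm⟩
  rw [← (add_left_surjective s).range_comp f] at hmin hxH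
  refine hG.false_of_adj_zero (hf.rotate s) (by omega) hmin hxH (fun _ => hx _) (fun _ => hyf _) hxy
    (by simpa using hs) ?_
  rwa [Nat.cast_sub (by omega), ZMod.natCast_self, Nat.cast_one, zero_sub, ← sub_eq_add_neg]

end Attachment

theorem exists_adj_boundary_of_reachable_deleteSet {V : Type*} {G : SimpleGraph V} {S A : Set V}
    {a b : V} (h : (deleteSet G S).Reachable a b) (ha : a ∈ A) (hb : b ∉ A) :
    ∃ x y, G.Adj x y ∧ x ∈ A ∧ x ∉ S ∧ y ∉ A := by
  obtain ⟨p⟩ := h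
  obtain ⟨d, -, hd, hd'⟩ := p.exists_boundary_dart A ha hb
  exact ⟨d.fst, d.snd, d.adj.1, hd, d.adj.2.1, hd'⟩

theorem stmt_15_general {V : Type*} (G : SimpleGraph V) (hG : Prereduced G)
    (H : Set V) (hH : IsHole G H)
    (hmin : ∀ H' : Set V, IsHole G H' → Congenial G H H' → H.ncard ≤ H'.ncard) :
    ∀ a ∈ closedNbhdSet G H \ commonNbrs G H,
      ∀ b ∈ (Set.univ \ closedNbhdSet G H) \ commonNbrs G H,
        ¬ (deleteSet G (commonNbrs G H)).Reachable a b := by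
  intro a ha b hb hab
  obtain ⟨x, y, hxy, hxH, hxN, hy⟩ := exists_adj_boundary_of_reachable_deleteSet hab ha.1 hb.1.2
  obtain ⟨m, hm, f, hf, rfl⟩ := isHole_iff.1 hH
  exact hG.not_adj_of_minimal_hole hf hm hmin hxH hxN hy hxy

/-- For a hole `H` shortest among the holes congenial to it in a
prereduced graph, the common neighbors `N̂(H)` separate `N[H] \ N̂(H)` from
`V(G) \ N[H]`. -/
theorem stmt_15 {V : Type*} [Fintype V] (G : SimpleGraph V) (hG : Prereduced G)
    (H : Set V) (hH : IsHole G H)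
    (hmin : ∀ H' : Set V, IsHole G H' → Congenial G H H' → H.ncard ≤ H'.ncard) :
    ∀ a ∈ closedNbhdSet G H \ commonNbrs G H,
      ∀ b ∈ (Set.univ \ closedNbhdSet G H) \ commonNbrs G H,
        ¬ (deleteSet G (commonNbrs G H)).Reachable a b :=
  stmt_15_general G hG H hH hmin
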